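/- Let d ≥ 1 be a natural number, let f : ℝ → ℝ be twice continuously differentiable, and let t ∈ ℝ. Define F : EuclideanSpace ℝ (Fin d) → ℝ by F(x) = f(√(1+‖x‖²) + t). If x is such that, with q = √(1+‖x‖²), one has f'(q+t) ≤ 0 and f''(q+t) ≥ 0, then the Laplacian of F at x is at most f''(q+t). -/

import Mathlib

/-!
Write `q = √(1 + ‖x‖²)` and `s = q + t`. The chain rule gives, for every direction `v`,
`∂ᵥ∂ᵥF(x) = f''(s) ⟪x, v⟫² / q² + f'(s) (‖v‖² q² - ⟪x, v⟫²) / q³`.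
By Cauchy–Schwarz and `‖x‖ ≤ q` the second bracket is nonnegative, so it contributes at most `0`
when `f'(s) ≤ 0`. Summing the first term over an orthonormal basis gives `f''(s) ‖x‖² / q²`,
which is at most `f''(s)` because `f''(s) ≥ 0` and `‖x‖ ≤ q`.
-/

open scoped RealInnerProductSpace

section

variable {E : Type*} [NormedAddCommGroup E] [InnerProductSpace ℝ E]

theorem hasFDerivAt_sqrt_one_add_norm_sq (x : E) :
    HasFDerivAt (fun y : E => √(1 + ‖y‖ ^ 2)) ((√(1 + ‖x‖ ^ 2))⁻¹ • innerSL ℝ x) x := by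
  have hq : 0 < √(1 + ‖x‖ ^ 2) := Real.sqrt_pos.2 (by positivity)
  refine (((hasFDerivAt_id x).norm_sq.const_add 1).sqrt (by positivity)).congr_fderiv ?_
  ext v
  simp only [smul_apply, ContinuousLinearMap.comp_apply,
    ContinuousLinearMap.id_apply, id, smul_eq_mul]
  field_simp
  ring

theorem hasFDerivAt_comp_sqrt_one_add_norm_sq_add {φ : ℝ → ℝ} {t : ℝ} {x : E}
    (hφ : DifferentiableAt ℝ φ (√(1 + ‖x‖ ^ 2) + t)) :
    HasFDerivAt (fun y : E => φ (√(1 + ‖y‖ ^ 2) + t))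
      (deriv φ (√(1 + ‖x‖ ^ 2) + t) • (√(1 + ‖x‖ ^ 2))⁻¹ • innerSL ℝ x) x :=
  hφ.hasDerivAt.comp_hasFDerivAt x ((hasFDerivAt_sqrt_one_add_norm_sq x).add_const t)

theorem fderiv_comp_sqrt_one_add_norm_sq_add_apply {f : ℝ → ℝ} (hf : Differentiable ℝ f)
    (t : ℝ) (y v : E) :
    fderiv ℝ (fun z : E => f (√(1 + ‖z‖ ^ 2) + t)) y v =
      deriv f (√(1 + ‖y‖ ^ 2) + t) * ((√(1 + ‖y‖ ^ 2))⁻¹ * ⟪v, y⟫) := by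
  rw [(hasFDerivAt_comp_sqrt_one_add_norm_sq_add (hf _)).fderiv]
  simp [real_inner_comm]

theorem fderiv_fderiv_comp_sqrt_one_add_norm_sq_add_apply {f : ℝ → ℝ} (hf : Differentiable ℝ f)
    {t : ℝ} {x : E} (hf' : DifferentiableAt ℝ (deriv f) (√(1 + ‖x‖ ^ 2) + t)) (v : E) :
    fderiv ℝ (fun y => fderiv ℝ (fun z : E => f (√(1 + ‖z‖ ^ 2) + t)) y v) x v =
      deriv (deriv f) (√(1 + ‖x‖ ^ 2) + t) * (⟪x, v⟫ / √(1 + ‖x‖ ^ 2)) ^ 2 +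
      deriv f (√(1 + ‖x‖ ^ 2) + t) *
        (‖v‖ ^ 2 / √(1 + ‖x‖ ^ 2) - ⟪x, v⟫ ^ 2 / √(1 + ‖x‖ ^ 2) ^ 3) := by
  simp_rw [fderiv_comp_sqrt_one_add_norm_sq_add_apply hf]
  set q := √(1 + ‖x‖ ^ 2)
  have hq : 0 < q := Real.sqrt_pos.2 (by positivity)
  have hinv : HasFDerivAt (fun y : E => (√(1 + ‖y‖ ^ 2))⁻¹) ((-(q ^ 2)⁻¹) • q⁻¹ • innerSL ℝ x) x :=
    (hasDerivAt_inv hq.ne').comp_hasFDerivAt x (hasFDerivAt_sqrt_one_add_norm_sq x)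
  have hprod := (hasFDerivAt_comp_sqrt_one_add_norm_sq_add hf').fun_mul
    (hinv.fun_mul (innerSL ℝ v).hasFDerivAt)
  simp only [innerSL_apply_apply] at hprod
  rw [hprod.fderiv]
  simp only [add_apply, smul_apply, innerSL_apply_apply,
    smul_eq_mul, real_inner_self_eq_norm_sq, real_inner_comm v x]
  field_simp
  ring

theorem fderiv_fderiv_comp_sqrt_one_add_norm_sq_add_apply_le {f : ℝ → ℝ}
    (hf : Differentiable ℝ f) {t : ℝ} {x : E}
    (hf' : DifferentiableAt ℝ (deriv f) (√(1 + ‖x‖ ^ 2) + t))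
    (h_deriv : deriv f (√(1 + ‖x‖ ^ 2) + t) ≤ 0) (v : E) :
    fderiv ℝ (fun y => fderiv ℝ (fun z : E => f (√(1 + ‖z‖ ^ 2) + t)) y v) x v ≤
      deriv (deriv f) (√(1 + ‖x‖ ^ 2) + t) * (⟪x, v⟫ / √(1 + ‖x‖ ^ 2)) ^ 2 := by
  rw [fderiv_fderiv_comp_sqrt_one_add_norm_sq_add_apply hf hf']
  set q := √(1 + ‖x‖ ^ 2)
  have hq : 0 < q := Real.sqrt_pos.2 (by positivity)
  have hq_sq : q ^ 2 = 1 + ‖x‖ ^ 2 := Real.sq_sqrt (by positivity)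
  have h_inner : ⟪x, v⟫ ^ 2 ≤ q ^ 2 * ‖v‖ ^ 2 := by
    calc ⟪x, v⟫ ^ 2 ≤ (‖x‖ * ‖v‖) ^ 2 := by
          rw [← sq_abs]; gcongr; exact abs_real_inner_le_norm x v
      _ ≤ q ^ 2 * ‖v‖ ^ 2 := by rw [mul_pow, hq_sq]; gcongr; linarith
  have h_nonneg : 0 ≤ ‖v‖ ^ 2 / q - ⟪x, v⟫ ^ 2 / q ^ 3 := by
    rw [sub_nonneg, div_le_div_iff₀ (by positivity) hq]
    nlinarith [mul_le_mul_of_nonneg_right h_inner hq.le]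
  linarith [mul_nonpos_of_nonpos_of_nonneg h_deriv h_nonneg]

theorem sum_fderiv_fderiv_comp_sqrt_one_add_norm_sq_add_le {ι : Type*} [Fintype ι]
    (b : OrthonormalBasis ι ℝ E) {f : ℝ → ℝ} (hf : Differentiable ℝ f) {t : ℝ} {x : E}
    (hf' : DifferentiableAt ℝ (deriv f) (√(1 + ‖x‖ ^ 2) + t))
    (h_deriv : deriv f (√(1 + ‖x‖ ^ 2) + t) ≤ 0)
    (h_deriv2 : 0 ≤ deriv (deriv f) (√(1 + ‖x‖ ^ 2) + t)) :
    ∑ i, fderiv ℝ (fun y => fderiv ℝ (fun z : E => f (√(1 + ‖z‖ ^ 2) + t)) y (b i)) x (b i) ≤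
      deriv (deriv f) (√(1 + ‖x‖ ^ 2) + t) := by
  set q := √(1 + ‖x‖ ^ 2)
  have hq_sq : q ^ 2 = 1 + ‖x‖ ^ 2 := Real.sq_sqrt (by positivity)
  have h_sum : ∑ i, (⟪x, b i⟫ / q) ^ 2 ≤ 1 := by
    simp_rw [div_pow, ← Finset.sum_div, b.sum_sq_inner_left, hq_sq]
    exact div_le_one_of_le₀ (by linarith) (by positivity)
  calc _ ≤ ∑ i, deriv (deriv f) (q + t) * (⟪x, b i⟫ / q) ^ 2 :=
        Finset.sum_le_sum fun i _ =>
          fderiv_fderiv_comp_sqrt_one_add_norm_sq_add_apply_le hf hf' h_deriv (b i)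
    _ = deriv (deriv f) (q + t) * ∑ i, (⟪x, b i⟫ / q) ^ 2 := by rw [Finset.mul_sum]
    _ ≤ deriv (deriv f) (q + t) := mul_le_of_le_one_right h_deriv2 h_sum

end

theorem stmt_13_general (d : ℕ) (f : ℝ → ℝ) (hf : ContDiff ℝ 2 f) (t : ℝ)
    (F : EuclideanSpace ℝ (Fin d) → ℝ)
    (hF : ∀ x, F x = f (Real.sqrt (1 + ‖x‖ ^ 2) + t)) :
    ∀ x : EuclideanSpace ℝ (Fin d),
      deriv f (Real.sqrt (1 + ‖x‖ ^ 2) + t) ≤ 0 →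
      0 ≤ deriv (deriv f) (Real.sqrt (1 + ‖x‖ ^ 2) + t) →
      (∑ i : Fin d,
        fderiv ℝ (fun y => fderiv ℝ F y (EuclideanSpace.single i (1:ℝ))) x
          (EuclideanSpace.single i (1:ℝ)))
      ≤ deriv (deriv f) (Real.sqrt (1 + ‖x‖ ^ 2) + t) := by
  intro x h_deriv h_deriv2
  obtain rfl : F = fun y => f (√(1 + ‖y‖ ^ 2) + t) := funext hF
  have hf' : ContDiff ℝ 1 (deriv f) := ContDiff.deriv' (n := 1) hf
  simpa only [EuclideanSpace.basisFun_apply] using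
    sum_fderiv_fderiv_comp_sqrt_one_add_norm_sq_add_le (EuclideanSpace.basisFun (Fin d) ℝ)
      (hf.differentiable (by norm_num)) (hf'.differentiable one_ne_zero _) h_deriv h_deriv2

/-- Upper bound for the Laplacian (sum of second partial derivatives with
respect to the standard orthonormal basis) of `F(x) = f(√(1+‖x‖²) + t)`. -/
theorem stmt_13 (d : ℕ) (hd : 1 ≤ d) (f : ℝ → ℝ) (hf : ContDiff ℝ 2 f) (t : ℝ)
    (F : EuclideanSpace ℝ (Fin d) → ℝ)
    (hF : ∀ x, F x = f (Real.sqrt (1 + ‖x‖ ^ 2) + t)) :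
    ∀ x : EuclideanSpace ℝ (Fin d),
      deriv f (Real.sqrt (1 + ‖x‖ ^ 2) + t) ≤ 0 →
      0 ≤ deriv (deriv f) (Real.sqrt (1 + ‖x‖ ^ 2) + t) →
      (∑ i : Fin d,
        fderiv ℝ (fun y => fderiv ℝ F y (EuclideanSpace.single i (1:ℝ))) x
          (EuclideanSpace.single i (1:ℝ)))
      ≤ deriv (deriv f) (Real.sqrt (1 + ‖x‖ ^ 2) + t) :=
  stmt_13_general d f hf t F hF
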